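/- arXiv:1812.07418 — 4 statements merged into one kernel-verified Lean document; each statement's English description precedes it below -/
import Mathlib

section
/- Define F_{x,y}(θ) = (cos²θ − (x+y)cosθ + xy − sin²θ) / (((cosθ − x)² + sin²θ)((cosθ − y)² + sin²θ)). Then for all x > 2, y > 2 and θ ∈ [π/3, 2π/3], the function θ ↦ F_{x,y}(θ) is strictly decreasing in θ. -/
open Real

noncomputable def F (x y θ : ℝ) : ℝ :=
  (Real.cos θ^2 - (x+y)*Real.cos θ + x*y - Real.sin θ^2) /
    (((Real.cos θ - x)^2 + Real.sin θ^2) * ((Real.cos θ - y)^2 + Real.sin θ^2))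

lemma Qpos (x y a b : ℝ) (hx : 2 < x) (hy : 2 < y)
    (ha1 : -(1/2) ≤ a) (ha2 : a ≤ 1/2) (hb1 : -(1/2) ≤ b) (hb2 : b ≤ 1/2) :
    0 < 2*(a+b)*(1+(x+y)^2-x^2*y^2) + (x+y)*(x^2*y^2-x*y-3-4*a*b) - (x^3+y^3) := by
  nlinarith [mul_pos (sub_pos.2 hx) (sub_pos.2 hy), sq_nonneg (x-y), sq_nonneg (x+y-4),
    mul_pos (mul_pos (sub_pos.2 hx) (sub_pos.2 hy)) (mul_pos (sub_pos.2 hx) (sub_pos.2 hy)),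
    sq_nonneg (a+b), sq_nonneg (a-b), mul_nonneg (sub_nonneg.2 ha2) (sub_nonneg.2 hb2),
    mul_nonneg (by linarith : (0:ℝ) ≤ a + 1/2) (by linarith : (0:ℝ) ≤ b + 1/2),
    mul_nonneg (sub_nonneg.2 ha2) (by linarith : (0:ℝ) ≤ b + 1/2),
    mul_nonneg (by linarith : (0:ℝ) ≤ a + 1/2) (sub_nonneg.2 hb2),
    mul_pos (mul_pos (sub_pos.2 hx) (sub_pos.2 hy)) (mul_pos (by linarith : (0:ℝ)<x) (by linarith : (0:ℝ)<y))]

lemma gmono (x y a b : ℝ) (hx : 2 < x) (hy : 2 < y)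
    (ha1 : -(1/2) ≤ a) (ha2 : a ≤ 1/2) (hb1 : -(1/2) ≤ b) (hb2 : b ≤ 1/2) (hab : a < b) :
    (2*a^2-1-(x+y)*a+x*y) / ((x^2-2*x*a+1)*(y^2-2*y*a+1))
      < (2*b^2-1-(x+y)*b+x*y) / ((x^2-2*x*b+1)*(y^2-2*y*b+1)) := by
  have hDx : ∀ c : ℝ, -(1/2) ≤ c → c ≤ 1/2 → 0 < x^2-2*x*c+1 := by
    intro c h1 h2; nlinarith [sq_nonneg (x - c)]
  have hDy : ∀ c : ℝ, -(1/2) ≤ c → c ≤ 1/2 → 0 < y^2-2*y*c+1 := by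
    intro c h1 h2; nlinarith [sq_nonneg (y - c)]
  rw [div_lt_div_iff₀ (mul_pos (hDx a ha1 ha2) (hDy a ha1 ha2))
      (mul_pos (hDx b hb1 hb2) (hDy b hb1 hb2))]
  have hQ := Qpos x y a b hx hy ha1 ha2 hb1 hb2
  nlinarith [mul_pos (sub_pos.2 hab) hQ]

theorem F_strictAnti (x y : ℝ) (hx : 2 < x) (hy : 2 < y) :
    StrictAntiOn (fun θ => F x y θ) (Set.Icc (π/3) (2*π/3)) := by
  have hpi := Real.pi_pos
  have hsub : Set.Icc (π/3) (2*π/3) ⊆ Set.Icc 0 π := by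
    apply Set.Icc_subset_Icc <;> linarith
  have hcos : ∀ θ ∈ Set.Icc (π/3) (2*π/3), -(1/2) ≤ Real.cos θ ∧ Real.cos θ ≤ 1/2 := by
    intro θ hθ
    obtain ⟨h1, h2⟩ := hθ
    constructor
    · have := Real.cos_le_cos_of_nonneg_of_le_pi (by linarith) (by linarith) h2
      rwa [show (2*π/3 : ℝ) = π - π/3 by ring, Real.cos_pi_sub, Real.cos_pi_div_three] at this
    · have := Real.cos_le_cos_of_nonneg_of_le_pi (by linarith) (by linarith : θ ≤ π) h1
      rwa [Real.cos_pi_div_three] at this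
  have hF : ∀ θ : ℝ, F x y θ =
      (2*(Real.cos θ)^2-1-(x+y)*Real.cos θ+x*y) /
        ((x^2-2*x*Real.cos θ+1)*(y^2-2*y*Real.cos θ+1)) := by
    intro θ
    have hs := Real.sin_sq θ
    unfold F
    rw [hs]
    ring_nf
  intro θ1 h1 θ2 h2 h12
  have hc12 : Real.cos θ2 < Real.cos θ1 :=
    Real.strictAntiOn_cos (hsub h1) (hsub h2) h12
  obtain ⟨hb1, hb2⟩ := hcos θ1 h1
  obtain ⟨ha1, ha2⟩ := hcos θ2 h2
  simp only [hF]
  exact gmono x y (Real.cos θ2) (Real.cos θ1) hx hy ha1 ha2 hb1 hb2 hc12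
end

section
/- Define F_{x,y}(θ) = (cos²θ − (x+y)cosθ + xy − sin²θ) / (((cosθ − x)² + sin²θ)((cosθ − y)² + sin²θ)). Then for all x, y with |x| ≤ 1, |y| ≤ 1 and θ ∈ [π/3, 2π/3], one has −1.4 < F_{x,y}(θ) < 0.2. -/
open Real

lemma F_aux_upper (a b w : ℝ) (hw : 3/4 ≤ w) :
    6 * (a*b - w) ≤ (a^2+w)*(b^2+w) := by
  nlinarith [sq_nonneg (a-b), sq_nonneg (a*b - 9/4),
    mul_nonneg (by linarith : (0:ℝ) ≤ w - 3/4) (sq_nonneg (a-b)), sq_nonneg (w + 3)]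

lemma F_aux_lower (a b w : ℝ) (hw : 3/4 ≤ w) :
    0 < 7/5 * ((a^2+w)*(b^2+w)) + (a*b - w) := by
  nlinarith [sq_nonneg (a+b), sq_nonneg (a-b), sq_nonneg (a*b - w),
    mul_nonneg (by linarith : (0:ℝ) ≤ w - 3/4) (sq_nonneg (a+b)),
    mul_nonneg (by linarith : (0:ℝ) ≤ w - 3/4) (sq_nonneg (a-b)),
    sq_nonneg (a*b - w + 3/4), sq_nonneg (7*(a*b-w) - 26/5)]

theorem F_bounds_small (x y θ : ℝ) (hx : |x| ≤ 1) (hy : |y| ≤ 1)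
    (hθ : θ ∈ Set.Icc (π/3) (2*π/3)) :
    -1.4 < F x y θ ∧ F x y θ < 0.2 := by
  obtain ⟨h1, h2⟩ := hθ
  have hpi := Real.pi_pos
  have hc1 : Real.cos θ ≤ 1/2 := by
    have := Real.cos_le_cos_of_nonneg_of_le_pi (by positivity) (by linarith) h1
    rwa [Real.cos_pi_div_three] at this
  have hc2 : -(1/2) ≤ Real.cos θ := by
    have := Real.cos_le_cos_of_nonneg_of_le_pi (by linarith) (by linarith) h2
    have h23 : Real.cos (2*π/3) = -(1/2) := by
      have : (2:ℝ)*π/3 = π - π/3 := by ring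
      rw [this, Real.cos_pi_sub, Real.cos_pi_div_three]
    rwa [h23] at this
  set c := Real.cos θ with hc
  set w := Real.sin θ ^ 2 with hwdef
  have hw : 3/4 ≤ w := by
    have h := Real.sin_sq_add_cos_sq θ
    nlinarith [sq_nonneg (c - 1/2), sq_nonneg (c + 1/2)]
  have hD : 0 < ((c - x)^2 + w) * ((c - y)^2 + w) := by positivity
  have hN : Real.cos θ^2 - (x+y)*Real.cos θ + x*y - Real.sin θ^2
      = (c - x)*(c - y) - w := by rw [← hc, ← hwdef]; ring
  constructor
  · rw [F, hN, ← hc, ← hwdef, lt_div_iff₀ hD]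
    have := F_aux_lower (c - x) (c - y) w hw
    nlinarith
  · rw [F, hN, ← hc, ← hwdef, div_lt_iff₀ hD]
    have := F_aux_upper (c - x) (c - y) w hw
    nlinarith
end

section
/- Define G_{x,y}(θ) = sinθ·(x + y − 2cosθ) / (((cosθ − x)² + sin²θ)((cosθ − y)² + sin²θ)). Then for all x, y with |x| ≤ 1, |y| ≤ 1 and θ ∈ [π/3, 2π/3], one has −√3/2 ≤ G_{x,y}(θ) ≤ √3/2, where G_{0,0}(π/3) = −√3/2 and G_{0,0}(2π/3) = √3/2. -/
open Real

noncomputable def G (x y θ : ℝ) : ℝ :=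
  Real.sin θ * (x + y - 2*Real.cos θ) /
    (((Real.cos θ - x)^2 + Real.sin θ^2) * ((Real.cos θ - y)^2 + Real.sin θ^2))

lemma key_ineq (s u v : ℝ) (hs : 0 < s) (hs2 : 3/4 ≤ s^2) :
    2*s*(u+v) ≤ Real.sqrt 3 * ((u^2+s^2)*(v^2+s^2)) := by
  have hk : Real.sqrt 3 ^ 2 = 3 := Real.sq_sqrt (by norm_num)
  have hk1 : 1 ≤ Real.sqrt 3 := by nlinarith [Real.sqrt_nonneg 3]
  set k := Real.sqrt 3 with hkdef
  have hcert : 6*k*s*(k*((u^2+s^2)*(v^2+s^2)) - 2*s*(u+v)) =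
      18*s*(u*v - s^2/3)^2 + 6*s^3*(u-v)^2 + s*(2*k*s*(u+v)-3)^2 + s*(16*s^4 - 9) := by
    linear_combination (6*s*((u^2+s^2)*(v^2+s^2)) - 4*s^3*(u+v)^2) * hk
  have h1 : 0 ≤ 18*s*(u*v - s^2/3)^2 + 6*s^3*(u-v)^2 + s*(2*k*s*(u+v)-3)^2 + s*(16*s^4 - 9) := by
    have : (0:ℝ) ≤ 16*s^4 - 9 := by nlinarith
    positivity
  have hpos : 0 < 6*k*s := by positivity
  nlinarith [hcert, h1, hpos]

theorem G_bounds_small :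
    (∀ x y θ : ℝ, |x| ≤ 1 → |y| ≤ 1 → θ ∈ Set.Icc (π/3) (2*π/3) →
      -Real.sqrt 3 / 2 ≤ G x y θ ∧ G x y θ ≤ Real.sqrt 3 / 2) ∧
    G 0 0 (π/3) = -Real.sqrt 3 / 2 ∧ G 0 0 (2*π/3) = Real.sqrt 3 / 2 := by
  have hpi := Real.pi_pos
  have hk : Real.sqrt 3 ^ 2 = 3 := Real.sq_sqrt (by norm_num)
  refine ⟨?_, ?_, ?_⟩
  · intro x y θ _ _ hθ
    obtain ⟨h1, h2⟩ := hθ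
    set s := Real.sin θ with hsdef
    set c := Real.cos θ with hcdef
    have hspos : 0 < s := Real.sin_pos_of_pos_of_lt_pi (by linarith) (by linarith)
    have hcle : c ≤ 1/2 := by
      have := Real.cos_le_cos_of_nonneg_of_le_pi (x := π/3) (by positivity) (by linarith) h1
      rwa [Real.cos_pi_div_three] at this
    have hcge : -(1/2) ≤ c := by
      have := Real.cos_le_cos_of_nonneg_of_le_pi (y := 2*π/3) (by linarith) (by linarith) h2
      have h23 : Real.cos (2*π/3) = -(1/2) := by
        have : (2*π/3 : ℝ) = π - π/3 := by ring
        rw [this, Real.cos_pi_sub, Real.cos_pi_div_three]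
      linarith [h23 ▸ this]
    have hpyth : s^2 + c^2 = 1 := Real.sin_sq_add_cos_sq θ
    have hs2 : 3/4 ≤ s^2 := by nlinarith
    have hA : 0 < (c - x)^2 + s^2 := by positivity
    have hB : 0 < (c - y)^2 + s^2 := by positivity
    have hAB : 0 < ((c - x)^2 + s^2) * ((c - y)^2 + s^2) := mul_pos hA hB
    have hup := key_ineq s (x - c) (y - c) hspos hs2
    have hdown := key_ineq s (c - x) (c - y) hspos hs2
    constructor
    · rw [G, neg_div, ← hsdef, ← hcdef, le_div_iff₀ hAB, neg_mul]
      nlinarith [hdown]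
    · rw [G, ← hsdef, ← hcdef, div_le_div_iff₀ hAB (by norm_num : (0:ℝ) < 2)]
      nlinarith [hup]
  · rw [G, Real.sin_pi_div_three, Real.cos_pi_div_three]
    rw [show ((1:ℝ)/2 - 0)^2 + (Real.sqrt 3/2)^2 = 1 by nlinarith]
    ring
  · have heq : (2*π/3 : ℝ) = π - π/3 := by ring
    have hsin : Real.sin (2*π/3) = Real.sqrt 3/2 := by
      rw [heq, Real.sin_pi_sub, Real.sin_pi_div_three]
    have hcos : Real.cos (2*π/3) = -(1/2) := by
      rw [heq, Real.cos_pi_sub, Real.cos_pi_div_three]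
    rw [G, hsin, hcos]
    rw [show (-((1:ℝ)/2) - 0)^2 + (Real.sqrt 3/2)^2 = 1 by nlinarith]
    ring
end

section
/- For integers a ≥ 3 and b ≥ a, the sum Σ_{k=a}^{b−1} (2k−1)·(−k² + 2k − 1/2)/(k² + k + 1)² is bounded above by −(1 − 2/a + 1/(2a²))·(2 log((b+1)/(a+2)) − 5/(a+2)). -/
open Real

private lemma Q_nonneg (s t : ℝ) (hs : 0 ≤ s) (ht : 0 ≤ t) :
    (0:ℝ) ≤ 2310 + 18490*t + 24020*t^2 + 12120*t^3 + 2690*t^4 + 220*t^5 + 8324*s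
      + 39694*s*t + 39644*s*t^2 + 15256*s*t^3 + 2426*s*t^4 + 124*s*t^5 + 12070*s^2
      + 36574*s^2*t + 26774*s^2*t^2 + 7288*s^2*t^3 + 724*s^2*t^4 + 16*s^2*t^5
      + 9214*s^3 + 18246*s^3*t + 9202*s^3*t^2 + 1568*s^3*t^3 + 72*s^3*t^4 + 4038*s^4
      + 5144*s^4*t + 1600*s^4*t^2 + 128*s^4*t^3 + 1024*s^5 + 772*s^5*t + 112*s^5*t^2
      + 140*s^6 + 48*s^6*t + 8*s^7 := by
  have h0_1 : (0:ℝ) ≤ s^0*t^1 := mul_nonneg (pow_nonneg hs 0) (pow_nonneg ht 1)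
  have h0_2 : (0:ℝ) ≤ s^0*t^2 := mul_nonneg (pow_nonneg hs 0) (pow_nonneg ht 2)
  have h0_3 : (0:ℝ) ≤ s^0*t^3 := mul_nonneg (pow_nonneg hs 0) (pow_nonneg ht 3)
  have h0_4 : (0:ℝ) ≤ s^0*t^4 := mul_nonneg (pow_nonneg hs 0) (pow_nonneg ht 4)
  have h0_5 : (0:ℝ) ≤ s^0*t^5 := mul_nonneg (pow_nonneg hs 0) (pow_nonneg ht 5)
  have h1_0 : (0:ℝ) ≤ s^1*t^0 := mul_nonneg (pow_nonneg hs 1) (pow_nonneg ht 0)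
  have h1_1 : (0:ℝ) ≤ s^1*t^1 := mul_nonneg (pow_nonneg hs 1) (pow_nonneg ht 1)
  have h1_2 : (0:ℝ) ≤ s^1*t^2 := mul_nonneg (pow_nonneg hs 1) (pow_nonneg ht 2)
  have h1_3 : (0:ℝ) ≤ s^1*t^3 := mul_nonneg (pow_nonneg hs 1) (pow_nonneg ht 3)
  have h1_4 : (0:ℝ) ≤ s^1*t^4 := mul_nonneg (pow_nonneg hs 1) (pow_nonneg ht 4)
  have h1_5 : (0:ℝ) ≤ s^1*t^5 := mul_nonneg (pow_nonneg hs 1) (pow_nonneg ht 5)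
  have h2_0 : (0:ℝ) ≤ s^2*t^0 := mul_nonneg (pow_nonneg hs 2) (pow_nonneg ht 0)
  have h2_1 : (0:ℝ) ≤ s^2*t^1 := mul_nonneg (pow_nonneg hs 2) (pow_nonneg ht 1)
  have h2_2 : (0:ℝ) ≤ s^2*t^2 := mul_nonneg (pow_nonneg hs 2) (pow_nonneg ht 2)
  have h2_3 : (0:ℝ) ≤ s^2*t^3 := mul_nonneg (pow_nonneg hs 2) (pow_nonneg ht 3)
  have h2_4 : (0:ℝ) ≤ s^2*t^4 := mul_nonneg (pow_nonneg hs 2) (pow_nonneg ht 4)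
  have h2_5 : (0:ℝ) ≤ s^2*t^5 := mul_nonneg (pow_nonneg hs 2) (pow_nonneg ht 5)
  have h3_0 : (0:ℝ) ≤ s^3*t^0 := mul_nonneg (pow_nonneg hs 3) (pow_nonneg ht 0)
  have h3_1 : (0:ℝ) ≤ s^3*t^1 := mul_nonneg (pow_nonneg hs 3) (pow_nonneg ht 1)
  have h3_2 : (0:ℝ) ≤ s^3*t^2 := mul_nonneg (pow_nonneg hs 3) (pow_nonneg ht 2)
  have h3_3 : (0:ℝ) ≤ s^3*t^3 := mul_nonneg (pow_nonneg hs 3) (pow_nonneg ht 3)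
  have h3_4 : (0:ℝ) ≤ s^3*t^4 := mul_nonneg (pow_nonneg hs 3) (pow_nonneg ht 4)
  have h4_0 : (0:ℝ) ≤ s^4*t^0 := mul_nonneg (pow_nonneg hs 4) (pow_nonneg ht 0)
  have h4_1 : (0:ℝ) ≤ s^4*t^1 := mul_nonneg (pow_nonneg hs 4) (pow_nonneg ht 1)
  have h4_2 : (0:ℝ) ≤ s^4*t^2 := mul_nonneg (pow_nonneg hs 4) (pow_nonneg ht 2)
  have h4_3 : (0:ℝ) ≤ s^4*t^3 := mul_nonneg (pow_nonneg hs 4) (pow_nonneg ht 3)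
  have h5_0 : (0:ℝ) ≤ s^5*t^0 := mul_nonneg (pow_nonneg hs 5) (pow_nonneg ht 0)
  have h5_1 : (0:ℝ) ≤ s^5*t^1 := mul_nonneg (pow_nonneg hs 5) (pow_nonneg ht 1)
  have h5_2 : (0:ℝ) ≤ s^5*t^2 := mul_nonneg (pow_nonneg hs 5) (pow_nonneg ht 2)
  have h6_0 : (0:ℝ) ≤ s^6*t^0 := mul_nonneg (pow_nonneg hs 6) (pow_nonneg ht 0)
  have h6_1 : (0:ℝ) ≤ s^6*t^1 := mul_nonneg (pow_nonneg hs 6) (pow_nonneg ht 1)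
  have h7_0 : (0:ℝ) ≤ s^7*t^0 := mul_nonneg (pow_nonneg hs 7) (pow_nonneg ht 0)
  linarith [h0_1, h0_2, h0_3, h0_4, h0_5, h1_0, h1_1, h1_2, h1_3, h1_4, h1_5, h2_0,
    h2_1, h2_2, h2_3, h2_4, h2_5, h3_0, h3_1, h3_2, h3_3, h3_4, h4_0, h4_1, h4_2,
    h4_3, h5_0, h5_1, h5_2, h6_0, h6_1, h7_0]

private lemma key_ineq_s14 (a k : ℝ) (ha : 3 ≤ a) (hk : a ≤ k) :
    (2*k - 1) * (-k^2 + 2*k - 1/2) / (k^2 + k + 1)^2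
      ≤ -(1 - 2/a + 1/(2*a^2)) * (2*(Real.log (k+2) - Real.log (k+1)))
        + (1 - 2/a + 1/(2*a^2)) * (5*a/(a+2)) * (1/k - 1/(k+1)) := by
  have ha0 : (0:ℝ) < a := by linarith
  have hk0 : (0:ℝ) < k := by linarith
  have hk1 : (0:ℝ) < k + 1 := by linarith
  have ha2 : (0:ℝ) < a + 2 := by linarith
  have hC : (0:ℝ) ≤ 1 - 2/a + 1/(2*a^2) := by
    have h2a : 2/a ≤ 2/3 := by
      rw [div_le_div_iff₀ ha0 (by norm_num)]; linarith
    have h1a : (0:ℝ) ≤ 1/(2*a^2) := by positivity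
    linarith
  have hlog : Real.log (k+2) - Real.log (k+1) ≤ 1/(k+1) := by
    have h1 : Real.log (k+2) - Real.log (k+1) = Real.log ((k+2)/(k+1)) :=
      (Real.log_div (by linarith) (by linarith)).symm
    have h2 := Real.log_le_sub_one_of_pos (show (0:ℝ) < (k+2)/(k+1) by positivity)
    have h3 : (k+2)/(k+1) - 1 = 1/(k+1) := by field_simp; ring
    rw [h1]; linarith
  have hmid : (2*k - 1) * (-k^2 + 2*k - 1/2) / (k^2 + k + 1)^2
      ≤ -(1 - 2/a + 1/(2*a^2)) * (2*(1/(k+1)))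
        + (1 - 2/a + 1/(2*a^2)) * (5*a/(a+2)) * (1/k - 1/(k+1)) := by
    have hQ := Q_nonneg (a-3) (k-a) (by linarith) (by linarith)
    have hnum : (0:ℝ) ≤ 2*a^2*(a+2)*k*(k+1)*(4*k^3 - 10*k^2 + 6*k - 1)
        - 2*(2*a^2 - 4*a + 1)*(2*a*k + 4*k - 5*a)*(k^2+k+1)^2 := by
      nlinarith [hQ]
    have hD : (0:ℝ) < 4*a^2*(a+2)*k*(k+1)*(k^2+k+1)^2 := by positivity
    have hEq : (-(1 - 2/a + 1/(2*a^2)) * (2*(1/(k+1)))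
        + (1 - 2/a + 1/(2*a^2)) * (5*a/(a+2)) * (1/k - 1/(k+1)))
        - (2*k - 1) * (-k^2 + 2*k - 1/2) / (k^2 + k + 1)^2
        = ((2*a^2*(a+2)*k*(k+1)*(4*k^3 - 10*k^2 + 6*k - 1)
            - 2*(2*a^2 - 4*a + 1)*(2*a*k + 4*k - 5*a)*(k^2+k+1)^2))
          / (4*a^2*(a+2)*k*(k+1)*(k^2+k+1)^2) := by
      field_simp
      ring
    have hfrac : (0:ℝ) ≤ ((2*a^2*(a+2)*k*(k+1)*(4*k^3 - 10*k^2 + 6*k - 1)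
            - 2*(2*a^2 - 4*a + 1)*(2*a*k + 4*k - 5*a)*(k^2+k+1)^2))
          / (4*a^2*(a+2)*k*(k+1)*(k^2+k+1)^2) := div_nonneg hnum hD.le
    linarith [hEq ▸ hfrac]
  have hmul : (1 - 2/a + 1/(2*a^2)) * (Real.log (k+2) - Real.log (k+1))
      ≤ (1 - 2/a + 1/(2*a^2)) * (1/(k+1)) := mul_le_mul_of_nonneg_left hlog hC
  linarith

theorem sum_upper_bound (a b : ℤ) (ha : 3 ≤ a) (hab : a < b) :
    ∑ k ∈ Finset.Ico a b,
        (2*(k:ℝ) - 1) * (-(k:ℝ)^2 + 2*(k:ℝ) - 1/2) / ((k:ℝ)^2 + (k:ℝ) + 1)^2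
      ≤ -(1 - 2/(a:ℝ) + 1/(2*(a:ℝ)^2))
          * (2 * Real.log (((b:ℝ)+1)/((a:ℝ)+2)) - 5/((a:ℝ)+2)) := by
  have haR : (3:ℝ) ≤ (a:ℝ) := by exact_mod_cast ha
  have ha0 : (0:ℝ) < (a:ℝ) := by linarith
  have hC : (0:ℝ) ≤ 1 - 2/(a:ℝ) + 1/(2*(a:ℝ)^2) := by
    have h2a : 2/(a:ℝ) ≤ 2/3 := by
      rw [div_le_div_iff₀ ha0 (by norm_num)]; linarith
    have h1a : (0:ℝ) ≤ 1/(2*(a:ℝ)^2) := by positivity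
    linarith
  obtain ⟨C, hCdef⟩ : ∃ C : ℝ, C = 1 - 2/(a:ℝ) + 1/(2*(a:ℝ)^2) := ⟨_, rfl⟩
  rw [← hCdef] at hC ⊢
  have main : ∀ c : ℤ, a + 1 ≤ c →
      ∑ k ∈ Finset.Ico a c,
        (2*(k:ℝ) - 1) * (-(k:ℝ)^2 + 2*(k:ℝ) - 1/2) / ((k:ℝ)^2 + (k:ℝ) + 1)^2
      ≤ -C * (2*(Real.log ((c:ℝ)+1) - Real.log ((a:ℝ)+1)))
        + C * (5*(a:ℝ)/((a:ℝ)+2)) * (1/(a:ℝ) - 1/(c:ℝ)) := by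
    refine Int.le_induction ?_ ?_
    ·
      have hIco : Finset.Ico a (a+1) = {a} := by
        ext x
        simp only [Finset.mem_Ico, Finset.mem_singleton]
        omega
      rw [hIco, Finset.sum_singleton]
      have hkey := key_ineq_s14 (a:ℝ) (a:ℝ) haR le_rfl
      rw [← hCdef] at hkey
      have hcast : ((a+1:ℤ):ℝ) = (a:ℝ) + 1 := by push_cast; ring
      rw [hcast]
      have hlogmono : Real.log ((a:ℝ)+1) ≤ Real.log ((a:ℝ)+2) :=
        Real.log_le_log (by linarith) (by linarith)
      have h1 : -C * (2*(Real.log ((a:ℝ)+2) - Real.log ((a:ℝ)+1)))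
          ≤ -C * (2*(Real.log ((a:ℝ)+1+1) - Real.log ((a:ℝ)+1))) := by
        have : Real.log ((a:ℝ)+1+1) = Real.log ((a:ℝ)+2) := by
          rw [show ((a:ℝ)+1+1) = (a:ℝ)+2 by ring]
        rw [this]
      linarith [hkey, h1]
    · intro n hn ih
      have hanR : (a:ℝ) ≤ (n:ℝ) := by exact_mod_cast (by linarith : a ≤ n)
      have hkey := key_ineq_s14 (a:ℝ) (n:ℝ) haR hanR
      rw [← hCdef] at hkey
      have hcast : ((n+1:ℤ):ℝ) = (n:ℝ) + 1 := by push_cast; ring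
      have hsplit : Finset.Ico a (n+1) = insert n (Finset.Ico a n) := by
        ext x
        simp only [Finset.mem_Ico, Finset.mem_insert]
        omega
      rw [hsplit, Finset.sum_insert (by simp), hcast]
      have e1 : Real.log ((n:ℝ)+1+1) = Real.log ((n:ℝ)+2) := by
        rw [show ((n:ℝ)+1+1) = (n:ℝ)+2 by ring]
      rw [e1]
      linarith [ih, hkey]
  have hbR : (a:ℝ) + 1 ≤ (b:ℝ) := by exact_mod_cast (by linarith : a + 1 ≤ b)
  have hb0 : (0:ℝ) < (b:ℝ) := by linarith
  have hmain := main b (by linarith)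
  have hlogdiv : Real.log (((b:ℝ)+1)/((a:ℝ)+2))
      = Real.log ((b:ℝ)+1) - Real.log ((a:ℝ)+2) :=
    Real.log_div (by linarith) (by linarith)
  have hlogmono : Real.log ((a:ℝ)+1) ≤ Real.log ((a:ℝ)+2) :=
    Real.log_le_log (by linarith) (by linarith)
  have htail : C * (5*(a:ℝ)/((a:ℝ)+2)) * (1/(a:ℝ) - 1/(b:ℝ)) ≤ C * (5/((a:ℝ)+2)) := by
    have e2 : C * (5*(a:ℝ)/((a:ℝ)+2)) * (1/(a:ℝ)) = C * (5/((a:ℝ)+2)) := by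
      field_simp
    have h3 : (0:ℝ) ≤ C * (5*(a:ℝ)/((a:ℝ)+2)) * (1/(b:ℝ)) := by
      apply mul_nonneg (mul_nonneg hC (by positivity)) (by positivity)
    nlinarith [h3, e2]
  have hlm : -C * (2*(Real.log ((b:ℝ)+1) - Real.log ((a:ℝ)+1)))
      ≤ -C * (2*(Real.log ((b:ℝ)+1) - Real.log ((a:ℝ)+2))) := by
    nlinarith [mul_le_mul_of_nonneg_left hlogmono hC]
  clear hlm
  have hmul : C * Real.log ((a:ℝ)+1) ≤ C * Real.log ((a:ℝ)+2) :=
    mul_le_mul_of_nonneg_left hlogmono hC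
  rw [hlogdiv]
  have expand : -C * (2 * (Real.log ((b:ℝ)+1) - Real.log ((a:ℝ)+2)) - 5/((a:ℝ)+2))
      = -C * (2*(Real.log ((b:ℝ)+1) - Real.log ((a:ℝ)+1)))
        - 2*(C * Real.log ((a:ℝ)+1)) + 2*(C * Real.log ((a:ℝ)+2)) + C * (5/((a:ℝ)+2)) := by
    ring
  rw [expand]
  linarith [hmain, htail, hmul]
end
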